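/- arXiv:1008.2686 — 3 statements merged into one kernel-verified Lean document; each statement's English description precedes it below -/
import Mathlib

section
/- (Feller property) For every finite Δ ⊂ ℤ^d, every J ∈ 𝒥_q, and every bounded continuous function f : ℝ^{ℤ^d} → ℝ, the function ξ ↦ ∫_{ℝ^{ℤ^d}} f(σ) π_Δ(dσ|J,ξ) is again a bounded continuous function on ℝ^{ℤ^d} (with the product topology). -/
open MeasureTheory ENNReal Filter Topology

noncomputable section

/-- The lattice `ℤ^d`. -/
abbrev Site (d : ℕ) : Type := Fin d → ℤ

/-- Spin configurations `ℝ^{ℤ^d}` (product topology, product σ-field). -/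
abbrev Config (d : ℕ) : Type := Site d → ℝ

/-- An edge of `ℤ^d`, encoded by its lower endpoint `x` and a direction `i`:
it joins `x` and `x + eᵢ`.  Every nearest-neighbour edge has a unique such encoding. -/
abbrev Edge (d : ℕ) : Type := Site d × Fin d

namespace Paper

/-- the σ-field `ℬ(𝒫(·))` (for a Polish state space it coincides with the Borel σ-field
of the weak topology). -/
instance instMeasurableSpaceProbabilityMeasure {Ω : Type*} [MeasurableSpace Ω] :
    MeasurableSpace (ProbabilityMeasure Ω) := by
  unfold ProbabilityMeasure; infer_instance

variable (d : ℕ)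

/-- the `i`-th unit vector of `ℤ^d` -/
def unitv (i : Fin d) : Site d := fun j => if j = i then 1 else 0

/-- the second endpoint of an edge -/
def ept (e : Edge d) : Site d := e.1 + unitv d e.2

/-- the neighbours of a site (the `y` with `|x - y| = 1`) -/
def nbrs (x : Site d) : Finset (Site d) :=
  (Finset.univ.image fun i : Fin d => x + unitv d i) ∪
    (Finset.univ.image fun i : Fin d => x - unitv d i)

/-- the edges incident to a site -/
def nbrEdges (x : Site d) : Finset (Edge d) :=
  (Finset.univ.image fun i : Fin d => ((x, i) : Edge d)) ∪
    (Finset.univ.image fun i : Fin d => ((x - unitv d i, i) : Edge d))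

/-- the edges having at least one endpoint in `Δ` -/
def edgesIn (Δ : Finset (Site d)) : Finset (Edge d) := Δ.biUnion (nbrEdges d)

/-- the outer boundary `∂Δ` -/
def bdry (Δ : Finset (Site d)) : Finset (Site d) := (Δ.biUnion (nbrs d)) \ Δ

/-- the configuration `σ_Δ × ξ_{Δᶜ}` -/
def glue (Δ : Finset (Site d)) (σ : (x : Δ) → ℝ) (ξ : Config d) : Config d :=
  fun x => if h : x ∈ Δ then σ ⟨x, h⟩ else ξ x

/-- minus the interaction energy, `-H_Δ(σ_Δ | J, ξ)` -/
def energy (Δ : Finset (Site d)) (J : Edge d → ℝ) (σ : (x : Δ) → ℝ) (ξ : Config d) : ℝ :=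
  ∑ e ∈ edgesIn d Δ, J e * glue d Δ σ ξ e.1 * glue d Δ σ ξ (ept d e)

variable (χ : Site d → Measure ℝ) [∀ x, SigmaFinite (χ x)]

/-- the product reference measure `⊗_{x ∈ Δ} χ_x` on `ℝ^Δ` -/
def refMeas (Δ : Finset (Site d)) : Measure ((x : Δ) → ℝ) := Measure.pi fun x : Δ => χ x.1

/-- the partition function `Z_Δ(J, ξ)` -/
def Zpart (Δ : Finset (Site d)) (J : Edge d → ℝ) (ξ : Config d) : ℝ≥0∞ :=
  ∫⁻ σ, ENNReal.ofReal (Real.exp (energy d Δ J σ ξ)) ∂(refMeas d χ Δ)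

/-- the local (conditional) Gibbs measure `π_Δ(·|J,ξ)` on `ℝ^{ℤ^d}` -/
def gibbsKernel (Δ : Finset (Site d)) (J : Edge d → ℝ) (ξ : Config d) : Measure (Config d) :=
  (Zpart d χ Δ J ξ)⁻¹ •
    Measure.map (fun σ => glue d Δ σ ξ)
      ((refMeas d χ Δ).withDensity fun σ => ENNReal.ofReal (Real.exp (energy d Δ J σ ξ)))

open scoped Classical in
/-- `π_Δ(·|J,ξ)` as an element of `𝒫(ℝ^{ℤ^d})`; under the standing assumptions the
local Gibbs measure is indeed a probability measure, so the `dite` branch is the real one. -/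
def gibbsPK (Δ : Finset (Site d)) (J : Edge d → ℝ) (ξ : Config d) :
    ProbabilityMeasure (Config d) :=
  if h : IsProbabilityMeasure (gibbsKernel d χ Δ J ξ) then ⟨gibbsKernel d χ Δ J ξ, h⟩
  else ⟨Measure.dirac 0, by infer_instance⟩

variable (w : Site d → ℝ) (p q : ℝ)

/-- `‖σ‖_p^p` -/
def pnormP (σ : Config d) : ℝ := ∑' x, |σ x| ^ p * w x

/-- the set `𝒮_p` of tempered configurations -/
def SpSet : Set (Config d) := {σ : Config d | Summable fun x => |σ x| ^ p * w x}

/-- the weight `w x + w y` attached to an edge -/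
def eWt (e : Edge d) : ℝ := w e.1 + w (ept d e)

/-- `‖J‖_q^q` -/
def JnormQ (J : Edge d → ℝ) : ℝ := ∑' e, |J e| ^ q * eWt d w e

/-- the set `𝒥_q` of tempered interactions -/
def JqSet : Set (Edge d → ℝ) := {J : Edge d → ℝ | Summable fun e => |J e| ^ q * eWt d w e}

/-- `𝒥_q` as a (measurable) space: its Borel σ-field coincides with the trace of the
product σ-field of `ℝ^E`. -/
abbrev JqT : Type := {J : Edge d → ℝ // Summable fun e => |J e| ^ q * eWt d w e}

/-- `C₊(λ) = sup_x ∫ exp(λ|u|^p) χ_x(du)` -/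
def Cplus (l : ℝ) : ℝ≥0∞ := ⨆ x : Site d, ∫⁻ u, ENNReal.ofReal (Real.exp (l * |u| ^ p)) ∂(χ x)

/-- `C₋(λ) = inf_x ∫ exp(-λ|u|^p) χ_x(du)` -/
def Cminus (l : ℝ) : ℝ≥0∞ := ⨅ x : Site d, ∫⁻ u, ENNReal.ofReal (Real.exp (-(l * |u| ^ p))) ∂(χ x)

/-- the set `𝒢_p(J)` of tempered Gibbs measures -/
def GibbsSet (J : Edge d → ℝ) : Set (ProbabilityMeasure (Config d)) :=
  {μ : ProbabilityMeasure (Config d) |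
    (μ : Measure (Config d)) (SpSet d w p) = 1 ∧
      ∀ (Δ : Finset (Site d)) (A : Set (Config d)), MeasurableSet A →
        ∫⁻ ξ, (gibbsKernel d χ Δ J ξ) A ∂(μ : Measure (Config d)) = (μ : Measure (Config d)) A}

/-- the local pressure `p_Δ(J,ξ)` -/
def pressure (Δ : Finset (Site d)) (J : Edge d → ℝ) (ξ : Config d) : ℝ :=
  ((Δ.card : ℝ))⁻¹ * Real.log (Zpart d χ Δ J ξ).toReal

/-- `p̄^μ_Δ(J)` -/
def pbar (Δ : Finset (Site d)) (μ : Measure (Config d)) (J : Edge d → ℝ) : ℝ :=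
  ∫ ξ, pressure d χ Δ J ξ ∂μ

/-- a cofinal (exhausting, increasing) sequence of finite volumes -/
def Cofinal (D : ℕ → Finset (Site d)) : Prop :=
  (∀ n, (D n).Nonempty) ∧ (∀ n, D n ⊆ D (n + 1)) ∧ ∀ x : Site d, ∃ n, x ∈ D n

/-- a random Gibbs measure -/
def IsRandomGibbs (ν : Measure (JqT d w q)) (μm : JqT d w q → ProbabilityMeasure (Config d)) :
    Prop :=
  Measurable μm ∧ ∀ᵐ J ∂ν, μm J ∈ GibbsSet d χ w p J.1

end Paper

open Paper

/-!
The energy `-H_Δ(σ|J,ξ)` is a finite sum of terms `J_{xy} σ(x) σ(y)` over the edges meeting `Δ`,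
so it is at most `K(ξ) (1 + Σ_{x∈Δ} |σ x|)²` with `K` continuous in `ξ`. Since `p ≥ 2`, this is
at most `a + λ Σ_{x∈Δ} |σ x|^p`, and `exp (λ |u|^p)` is `χ_x`-integrable because `C₊(λ) < ∞`.
Hence, locally uniformly in `ξ`, the Boltzmann weight is dominated by a fixed integrable function,
and dominated convergence makes both `Z_Δ(J,ξ)` and `∫ exp(-H_Δ) f(σ_Δ × ξ_{Δᶜ})` continuous
in `ξ`; their quotient is `∫ f dπ_Δ(·|J,ξ)`. It is bounded by `‖f‖` because `π_Δ(·|J,ξ)` is a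
probability measure.
-/

open Real

section FiniteSums

variable {ι : Type*} [Fintype ι] {p : ℝ}

lemma sq_le_one_add_rpow {t : ℝ} (ht : 0 ≤ t) (hp : 2 ≤ p) : t ^ 2 ≤ 1 + t ^ p := by
  rcases le_or_gt t 1 with h | h
  · nlinarith [pow_le_one₀ (n := 2) ht h, rpow_nonneg ht p]
  · have := rpow_le_rpow_of_exponent_le h.le hp
    rw [Real.rpow_two] at this
    linarith

lemma one_add_sum_abs_sq_le (hp : 2 ≤ p) (a : ι → ℝ) :
    (1 + ∑ i, |a i|) ^ 2 ≤
      2 * (1 + (Fintype.card ι : ℝ) ^ 2) + 2 * Fintype.card ι * ∑ i, |a i| ^ p := by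
  set n : ℝ := (Fintype.card ι : ℝ)
  have hn : 0 ≤ n := Nat.cast_nonneg _
  have hCS : (∑ i, |a i|) ^ 2 ≤ n * ∑ i, |a i| ^ 2 := by
    simpa using sq_sum_le_card_mul_sum_sq (s := Finset.univ) (f := fun i => |a i|)
  have hsq : ∑ i, |a i| ^ 2 ≤ n + ∑ i, |a i| ^ p :=
    calc ∑ i, |a i| ^ 2 ≤ ∑ i, (1 + |a i| ^ p) :=
          Finset.sum_le_sum fun i _ => sq_le_one_add_rpow (abs_nonneg _) hp
      _ = n + ∑ i, |a i| ^ p := by simp [Finset.sum_add_distrib, n]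
  nlinarith [sq_nonneg (1 - ∑ i, |a i|), mul_le_mul_of_nonneg_left hsq hn]

end FiniteSums

namespace Paper

section Energy

variable {d : ℕ} (Δ : Finset (Site d)) (J : Edge d → ℝ)

def energySites : Finset (Site d) :=
  (edgesIn d Δ).image Prod.fst ∪ (edgesIn d Δ).image (ept d)

def couplingBound (ξ : Config d) : ℝ :=
  (∑ e ∈ edgesIn d Δ, |J e|) * (1 + ∑ x ∈ energySites Δ, |ξ x|) ^ 2

lemma couplingBound_nonneg (ξ : Config d) : 0 ≤ couplingBound Δ J ξ := by
  unfold couplingBound; positivity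

lemma continuous_couplingBound : Continuous (couplingBound Δ J) := by
  unfold couplingBound; fun_prop

@[fun_prop]
lemma continuous_glue : Continuous fun s : ((x : Δ) → ℝ) × Config d => glue d Δ s.1 s.2 := by
  refine continuous_pi fun x => ?_
  by_cases h : x ∈ Δ
  · simp only [glue, h, dif_pos]
    fun_prop
  · simp only [glue, h, dif_neg, not_false_iff]
    fun_prop

@[fun_prop]
lemma continuous_energy :
    Continuous fun s : ((x : Δ) → ℝ) × Config d => energy d Δ J s.1 s.2 := by
  unfold energy
  fun_prop

lemma abs_glue_le (σ : (x : Δ) → ℝ) (ξ : Config d) {x : Site d} (hx : x ∈ energySites Δ) :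
    |glue d Δ σ ξ x| ≤ (1 + ∑ y ∈ energySites Δ, |ξ y|) * (1 + ∑ y, |σ y|) := by
  have hξ : 0 ≤ ∑ y ∈ energySites Δ, |ξ y| := by positivity
  have hσ : 0 ≤ ∑ y, |σ y| := by positivity
  by_cases h : x ∈ Δ
  · have : |σ ⟨x, h⟩| ≤ ∑ y, |σ y| :=
      Finset.single_le_sum (f := fun y => |σ y|) (fun _ _ => abs_nonneg _) (Finset.mem_univ _)
    simp only [glue, h, dif_pos]
    nlinarith
  · have : |ξ x| ≤ ∑ y ∈ energySites Δ, |ξ y| :=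
      Finset.single_le_sum (f := fun y => |ξ y|) (fun _ _ => abs_nonneg _) hx
    simp only [glue, h, dif_neg, not_false_iff]
    nlinarith

lemma abs_energy_le (σ : (x : Δ) → ℝ) (ξ : Config d) :
    |energy d Δ J σ ξ| ≤ couplingBound Δ J ξ * (1 + ∑ x, |σ x|) ^ 2 := by
  refine (Finset.abs_sum_le_sum_abs _ _).trans ?_
  rw [couplingBound, Finset.sum_mul, Finset.sum_mul]
  refine Finset.sum_le_sum fun e he => ?_
  have h₁ := abs_glue_le Δ σ ξ (Finset.mem_union_left _ (Finset.mem_image_of_mem Prod.fst he))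
  have h₂ := abs_glue_le Δ σ ξ (Finset.mem_union_right _ (Finset.mem_image_of_mem (ept d) he))
  calc |J e * glue d Δ σ ξ e.1 * glue d Δ σ ξ (ept d e)|
      = |J e| * |glue d Δ σ ξ e.1| * |glue d Δ σ ξ (ept d e)| := by rw [abs_mul, abs_mul]
    _ ≤ |J e| * ((1 + ∑ y ∈ energySites Δ, |ξ y|) * (1 + ∑ y, |σ y|)) *
          ((1 + ∑ y ∈ energySites Δ, |ξ y|) * (1 + ∑ y, |σ y|)) := by gcongr
    _ = _ := by ring

def weightMajorant (p C : ℝ) (σ : (x : Δ) → ℝ) : ℝ :=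
  exp (2 * C * (1 + (Δ.card : ℝ) ^ 2) + (2 * C * Δ.card + 1) * ∑ x, |σ x| ^ p)

lemma exp_energy_le_weightMajorant {p C : ℝ} (hp : 2 ≤ p) {ξ : Config d}
    (hC : couplingBound Δ J ξ ≤ C) (σ : (x : Δ) → ℝ) :
    exp (energy d Δ J σ ξ) ≤ weightMajorant Δ p C σ := by
  have hK := couplingBound_nonneg Δ J ξ
  have hsq := one_add_sum_abs_sq_le hp σ
  rw [Fintype.card_coe] at hsq
  have hE := (le_abs_self _).trans (abs_energy_le Δ J σ ξ)
  have hsum : 0 ≤ ∑ x, |σ x| ^ p := Finset.sum_nonneg fun x _ => rpow_nonneg (abs_nonneg _) p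
  refine exp_le_exp.2 ?_
  calc energy d Δ J σ ξ ≤ C * (1 + ∑ x, |σ x|) ^ 2 :=
        hE.trans (mul_le_mul_of_nonneg_right hC (sq_nonneg _))
    _ ≤ C * (2 * (1 + (Δ.card : ℝ) ^ 2) + 2 * Δ.card * ∑ x, |σ x| ^ p) :=
        mul_le_mul_of_nonneg_left hsq (hK.trans hC)
    _ ≤ _ := by nlinarith

end Energy

section ReferenceMeasure

variable {d : ℕ} (Δ : Finset (Site d)) (J : Edge d → ℝ) (χ : Site d → Measure ℝ) {p : ℝ}

lemma integrable_exp_mul_rpow {l : ℝ} (hl : Cplus d χ p l < ⊤) (x : Site d) :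
    Integrable (fun u : ℝ => exp (l * |u| ^ p)) (χ x) := by
  refine ⟨(by fun_prop : Measurable fun u : ℝ => exp (l * |u| ^ p)).aestronglyMeasurable, ?_⟩
  rw [hasFiniteIntegral_iff_ofReal (ae_of_all _ fun u => (exp_pos _).le)]
  exact (le_iSup (fun y => ∫⁻ u, ENNReal.ofReal (exp (l * |u| ^ p)) ∂(χ y)) x).trans_lt hl

lemma integral_gibbsKernel (ξ : Config d) {f : Config d → ℝ} (hf : Measurable f) :
    ∫ σ, f σ ∂(gibbsKernel d χ Δ J ξ) =
      (∫ σ, exp (energy d Δ J σ ξ) ∂(refMeas d χ Δ))⁻¹ *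
        ∫ σ, exp (energy d Δ J σ ξ) * f (glue d Δ σ ξ) ∂(refMeas d χ Δ) := by
  have hZ : (Zpart d χ Δ J ξ).toReal = ∫ σ, exp (energy d Δ J σ ξ) ∂(refMeas d χ Δ) :=
    (integral_eq_lintegral_of_nonneg_ae (ae_of_all _ fun _ => (exp_pos _).le)
      (by fun_prop)).symm
  rw [gibbsKernel, integral_smul_measure, integral_map (by fun_prop) hf.aestronglyMeasurable,
    integral_withDensity_eq_integral_toReal_smul (by fun_prop)
      (ae_of_all _ fun _ => ENNReal.ofReal_lt_top), ENNReal.toReal_inv, hZ]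
  simp only [ENNReal.toReal_ofReal (exp_pos _).le, smul_eq_mul]

section SigmaFinite

variable [∀ x, SigmaFinite (χ x)]

lemma integrable_exp_mul_sum_rpow {l : ℝ} (hl : Cplus d χ p l < ⊤) :
    Integrable (fun σ : (x : Δ) → ℝ => exp (l * ∑ x, |σ x| ^ p)) (refMeas d χ Δ) := by
  simp_rw [Finset.mul_sum, exp_sum]
  exact Integrable.fintype_prod (f := fun _ u => exp (l * |u| ^ p))
    fun x => integrable_exp_mul_rpow χ hl x.1

lemma integrable_weightMajorant (hCp : ∀ l : ℝ, 0 < l → Cplus d χ p l < ⊤) {C : ℝ}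
    (hC : 0 ≤ C) : Integrable (weightMajorant Δ p C) (refMeas d χ Δ) := by
  unfold weightMajorant
  simp_rw [exp_add]
  exact (integrable_exp_mul_sum_rpow Δ χ (hCp _ (by positivity))).const_mul _

lemma integrable_exp_energy (hp : 2 ≤ p) (hCp : ∀ l : ℝ, 0 < l → Cplus d χ p l < ⊤)
    (ξ : Config d) :
    Integrable (fun σ => exp (energy d Δ J σ ξ)) (refMeas d χ Δ) :=
  (integrable_weightMajorant Δ χ hCp (couplingBound_nonneg Δ J ξ)).mono'
    (by fun_prop) (ae_of_all _ fun σ => by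
      rw [norm_of_nonneg (exp_pos _).le]
      exact exp_energy_le_weightMajorant Δ J hp le_rfl σ)

lemma continuous_integral_exp_energy_mul (hp : 2 ≤ p)
    (hCp : ∀ l : ℝ, 0 < l → Cplus d χ p l < ⊤) (g : BoundedContinuousFunction (Config d) ℝ) :
    Continuous fun ξ => ∫ σ, exp (energy d Δ J σ ξ) * g (glue d Δ σ ξ) ∂(refMeas d χ Δ) := by
  refine continuous_iff_continuousAt.2 fun ξ₀ => ?_
  have hnear : ∀ᶠ ξ in 𝓝 ξ₀, couplingBound Δ J ξ < couplingBound Δ J ξ₀ + 1 :=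
    (continuous_couplingBound Δ J).continuousAt.eventually_lt_const (lt_add_one _)
  refine continuousAt_of_dominated
    (bound := fun σ => weightMajorant Δ p (couplingBound Δ J ξ₀ + 1) σ * ‖g‖)
    (Eventually.of_forall fun ξ => ?_) (hnear.mono fun ξ hξ => ae_of_all _ fun σ => ?_)
    ((integrable_weightMajorant Δ χ hCp (by linarith [couplingBound_nonneg Δ J ξ₀])).mul_const _)
    (ae_of_all _ fun σ => ?_)
  · exact (by fun_prop : Continuous fun σ => exp (energy d Δ J σ ξ) * g (glue d Δ σ ξ))
      |>.aestronglyMeasurable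
  · rw [norm_mul, norm_of_nonneg (exp_pos _).le]
    exact mul_le_mul (exp_energy_le_weightMajorant Δ J hp hξ.le σ) (g.norm_coe_le_norm _)
      (norm_nonneg _) (exp_pos _).le
  · exact (by fun_prop : Continuous fun ξ => exp (energy d Δ J σ ξ) * g (glue d Δ σ ξ))
      |>.continuousAt

end SigmaFinite

section Probability

variable [∀ x, IsProbabilityMeasure (χ x)]

instance isProbabilityMeasure_refMeas : IsProbabilityMeasure (refMeas d χ Δ) := by
  unfold refMeas; infer_instance

lemma integral_exp_energy_pos (hp : 2 ≤ p) (hCp : ∀ l : ℝ, 0 < l → Cplus d χ p l < ⊤)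
    (ξ : Config d) : 0 < ∫ σ, exp (energy d Δ J σ ξ) ∂(refMeas d χ Δ) :=
  integral_exp_pos (integrable_exp_energy Δ J χ hp hCp ξ)

lemma isProbabilityMeasure_gibbsKernel (hp : 2 ≤ p)
    (hCp : ∀ l : ℝ, 0 < l → Cplus d χ p l < ⊤) (ξ : Config d) :
    IsProbabilityMeasure (gibbsKernel d χ Δ J ξ) := by
  have hZ : Zpart d χ Δ J ξ = ENNReal.ofReal (∫ σ, exp (energy d Δ J σ ξ) ∂(refMeas d χ Δ)) :=
    (ofReal_integral_eq_lintegral_ofReal (integrable_exp_energy Δ J χ hp hCp ξ)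
      (ae_of_all _ fun _ => (exp_pos _).le)).symm
  constructor
  rw [gibbsKernel, Measure.smul_apply, Measure.map_apply (by fun_prop) MeasurableSet.univ,
    Set.preimage_univ, withDensity_apply _ MeasurableSet.univ, Measure.restrict_univ,
    ← Zpart, smul_eq_mul, hZ]
  exact ENNReal.inv_mul_cancel (ENNReal.ofReal_pos.2 (integral_exp_energy_pos Δ J χ hp hCp ξ)).ne'
    ENNReal.ofReal_ne_top

end Probability

end ReferenceMeasure

end Paper

theorem feller_property_general (d : ℕ)
    (w : Site d → ℝ)
    (q p : ℝ) (hq : 1 < q) (hp : p = 2 * q / (q - 1))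
    (χ : Site d → Measure ℝ) [∀ x, IsProbabilityMeasure (χ x)]
    (hCp : ∀ l : ℝ, 0 < l → Cplus d χ p l < ⊤) :
    ∀ (Δ : Finset (Site d)), ∀ J ∈ JqSet d w q, ∀ f : BoundedContinuousFunction (Config d) ℝ,
      Continuous (fun ξ : Config d => ∫ σ, f σ ∂(gibbsKernel d χ Δ J ξ)) ∧
      ∃ M : ℝ, ∀ ξ : Config d, |∫ σ, f σ ∂(gibbsKernel d χ Δ J ξ)| ≤ M := by
  intro Δ J _ f
  have hp2 : 2 ≤ p := by
    rw [hp, le_div_iff₀ (by linarith)]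
    linarith
  have hZ := continuous_integral_exp_energy_mul Δ J χ hp2 hCp 1
  simp only [BoundedContinuousFunction.coe_one, Pi.one_apply, mul_one] at hZ
  refine ⟨?_, ‖f‖, fun ξ => ?_⟩
  · simp_rw [integral_gibbsKernel Δ J χ _ f.continuous.measurable]
    exact (hZ.inv₀ fun ξ => (integral_exp_energy_pos Δ J χ hp2 hCp ξ).ne').mul
      (continuous_integral_exp_energy_mul Δ J χ hp2 hCp f)
  · have := isProbabilityMeasure_gibbsKernel Δ J χ hp2 hCp ξ
    exact f.norm_integral_le_norm _

/-- Lemma 4.3 (Feller property): the kernels map bounded continuous functions to bounded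
continuous functions. -/
theorem feller_property (d : ℕ) (hd : 0 < d)
    (w : Site d → ℝ) (hw_pos : ∀ x, 0 < w x) (hw_one : ∀ x, w x ≤ 1) (hw_sum : Summable w)
    (w₀ : ℝ) (hw₀ : 0 < w₀) (hw_nb : ∀ x : Site d, ∀ y ∈ nbrs d x, w x ≤ w₀ * w y)
    (q p : ℝ) (hq : 1 < q) (hp : p = 2 * q / (q - 1))
    (χ : Site d → Measure ℝ) [∀ x, IsProbabilityMeasure (χ x)]
    (hCp : ∀ l : ℝ, 0 < l → Cplus d χ p l < ⊤)
    (hCm : ∀ l : ℝ, 0 < l → 0 < Cminus d χ p l) :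
    ∀ (Δ : Finset (Site d)), ∀ J ∈ JqSet d w q, ∀ f : BoundedContinuousFunction (Config d) ℝ,
      Continuous (fun ξ : Config d => ∫ σ, f σ ∂(gibbsKernel d χ Δ J ξ)) ∧
      ∃ M : ℝ, ∀ ξ : Config d, |∫ σ, f σ ∂(gibbsKernel d χ Δ J ξ)| ≤ M :=
  feller_property_general d w q p hq hp χ hCp
end
end

section
/- (One-point estimate) For every λ > 0 and κ > 0, every x ∈ ℤ^d, every J ∈ 𝒥_q and every ξ ∈ ℝ^{ℤ^d}, the single-site kernel π_x := π_{{x}} satisfies ∫_{ℝ^{ℤ^d}} exp(λ|σ(x)|^p) π_x(dσ|J,ξ) ≤ exp( C(λ,κ) + 2κ Σ_{y∼x} |ξ(y)|^p + 2κ^{1−q} Σ_{y∼x} |J_{xy}|^q ), where C(λ,κ) = log C₊(λ + 2dκ) − log C₋(2dκ). -/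
open MeasureTheory ENNReal Filter Topology

noncomputable section

open Paper

/-!
Young's inequality with the conjugate exponents `q` and `p / 2 = q / (q - 1)`, followed by
AM-GM, bounds every bond term of the single-site energy by
`k ^ (1 - q) |J e| ^ q + (k / 2) (|σ x| ^ p + |ξ y| ^ p)`. Hence `|E(σ x)| ≤ A + 2dk |σ x| ^ p`
with `A` independent of `σ x`, so the numerator of the kernel is at most `e ^ A C₊(l + 2dk)` and
the partition function is at least `e ^ (-A) C₋(2dk)`.
-/

namespace Real

theorem young_inequality_of_nonneg_scaled {a b q r k : ℝ} (ha : 0 ≤ a) (hb : 0 ≤ b)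
    (hqr : q.HolderConjugate r) (hk : 0 < k) :
    a * b ≤ k ^ (1 - q) * a ^ q + k * b ^ r := by
  have hr := hqr.symm
  have hscale : a * b = (k ^ (-r⁻¹) * a) * (k ^ r⁻¹ * b) := by
    rw [mul_mul_mul_comm, ← rpow_add hk, neg_add_cancel, rpow_zero, one_mul]
  have hA : (k ^ (-r⁻¹) * a) ^ q = k ^ (1 - q) * a ^ q := by
    rw [mul_rpow (rpow_nonneg hk.le _) ha, ← rpow_mul hk.le, neg_mul, ← div_eq_inv_mul,
      hqr.div_conj_eq_sub_one, neg_sub]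
  have hB : (k ^ r⁻¹ * b) ^ r = k * b ^ r := by
    rw [mul_rpow (rpow_nonneg hk.le _) hb, ← rpow_mul hk.le, inv_mul_cancel₀ hr.ne_zero,
      rpow_one]
  calc a * b ≤ (k ^ (1 - q) * a ^ q) / q + (k * b ^ r) / r := by
        rw [hscale, ← hA, ← hB]
        exact young_inequality_of_nonneg (by positivity) (by positivity) hqr
    _ ≤ k ^ (1 - q) * a ^ q + k * b ^ r := by
        gcongr
        · exact div_le_self (by positivity) hqr.lt.le
        · exact div_le_self (by positivity) hr.lt.le

theorem rpow_mul_le_add_rpow_div_two {a b s : ℝ} (ha : 0 ≤ a) (hb : 0 ≤ b) :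
    (a * b) ^ s ≤ (a ^ (2 * s) + b ^ (2 * s)) / 2 := by
  have := geom_mean_le_arith_mean2_weighted (w₁ := 1 / 2) (w₂ := 1 / 2)
    (p₁ := a ^ (2 * s)) (p₂ := b ^ (2 * s)) (by norm_num) (by norm_num) (by positivity)
    (by positivity) (by norm_num)
  rw [← rpow_mul ha, ← rpow_mul hb] at this
  convert this using 1
  · rw [mul_rpow ha hb]; ring_nf
  · ring

theorem abs_mul_mul_le_of_holderConjugate {q p k : ℝ} (hqp : q.HolderConjugate (p / 2))
    (hk : 0 < k) (J a b : ℝ) :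
    |J * a * b| ≤ k ^ (1 - q) * |J| ^ q + k / 2 * (|a| ^ p + |b| ^ p) := by
  calc |J * a * b| = |J| * (|a| * |b|) := by rw [abs_mul, abs_mul, mul_assoc]
    _ ≤ k ^ (1 - q) * |J| ^ q + k * (|a| * |b|) ^ (p / 2) :=
        young_inequality_of_nonneg_scaled (abs_nonneg J) (by positivity) hqp hk
    _ ≤ k ^ (1 - q) * |J| ^ q + k * ((|a| ^ p + |b| ^ p) / 2) := by
        gcongr
        simpa only [mul_div_cancel₀ p two_ne_zero] using
          rpow_mul_le_add_rpow_div_two (s := p / 2) (abs_nonneg a) (abs_nonneg b)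
    _ = k ^ (1 - q) * |J| ^ q + k / 2 * (|a| ^ p + |b| ^ p) := by ring

end Real

theorem ENNReal.ofReal_exp_log_toReal_sub_log_toReal {a b : ℝ≥0∞} (ha₀ : a ≠ 0) (ha : a ≠ ⊤)
    (hb₀ : b ≠ 0) (hb : b ≠ ⊤) (t : ℝ) :
    ENNReal.ofReal (Real.exp (Real.log a.toReal - Real.log b.toReal + t)) =
      ENNReal.ofReal (Real.exp t) * a * b⁻¹ := by
  have ha' : 0 < a.toReal := ENNReal.toReal_pos ha₀ ha
  have hb' : 0 < b.toReal := ENNReal.toReal_pos hb₀ hb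
  rw [Real.exp_add, Real.exp_sub, Real.exp_log ha', Real.exp_log hb', div_eq_mul_inv, mul_comm,
    ← mul_assoc, ENNReal.ofReal_mul (by positivity), ENNReal.ofReal_mul (by positivity),
    ENNReal.ofReal_inv_of_pos hb', ENNReal.ofReal_toReal ha, ENNReal.ofReal_toReal hb]

open Real in
theorem MeasureTheory.lintegral_exp_ratio_le_of_abs_le {α : Type*} [MeasurableSpace α]
    (ν : Measure α) {E F g : α → ℝ} {A : ℝ} (hE : ∀ u, |E u| ≤ A + g u) :
    (∫⁻ u, ENNReal.ofReal (exp (E u)) ∂ν)⁻¹ *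
        ∫⁻ u, ENNReal.ofReal (exp (E u)) * ENNReal.ofReal (exp (F u)) ∂ν ≤
      ENNReal.ofReal (exp (2 * A)) * (∫⁻ u, ENNReal.ofReal (exp (F u + g u)) ∂ν) *
        (∫⁻ u, ENNReal.ofReal (exp (-g u)) ∂ν)⁻¹ := by
  have hnum : ∫⁻ u, ENNReal.ofReal (exp (E u)) * ENNReal.ofReal (exp (F u)) ∂ν ≤
      ENNReal.ofReal (exp A) * ∫⁻ u, ENNReal.ofReal (exp (F u + g u)) ∂ν := by
    rw [← lintegral_const_mul' _ _ ENNReal.ofReal_ne_top]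
    refine lintegral_mono fun u => ?_
    rw [← ENNReal.ofReal_mul (exp_nonneg _), ← ENNReal.ofReal_mul (exp_nonneg _), ← exp_add,
      ← exp_add]
    exact ENNReal.ofReal_le_ofReal (exp_le_exp.2 (by linarith [le_abs_self (E u), hE u]))
  have hZ : ENNReal.ofReal (exp (-A)) * ∫⁻ u, ENNReal.ofReal (exp (-g u)) ∂ν ≤
      ∫⁻ u, ENNReal.ofReal (exp (E u)) ∂ν := by
    rw [← lintegral_const_mul' _ _ ENNReal.ofReal_ne_top]
    refine lintegral_mono fun u => ?_
    rw [← ENNReal.ofReal_mul (exp_nonneg _), ← exp_add]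
    exact ENNReal.ofReal_le_ofReal (exp_le_exp.2 (by linarith [neg_abs_le (E u), hE u]))
  have hZinv : (∫⁻ u, ENNReal.ofReal (exp (E u)) ∂ν)⁻¹ ≤
      ENNReal.ofReal (exp A) * (∫⁻ u, ENNReal.ofReal (exp (-g u)) ∂ν)⁻¹ := by
    refine (ENNReal.inv_le_inv' hZ).trans_eq ?_
    rw [ENNReal.mul_inv (Or.inl (by simp [exp_pos])) (Or.inl ENNReal.ofReal_ne_top), exp_neg,
      ENNReal.ofReal_inv_of_pos (exp_pos A), inv_inv]
  calc _ ≤ (ENNReal.ofReal (exp A) * (∫⁻ u, ENNReal.ofReal (exp (-g u)) ∂ν)⁻¹) *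
        (ENNReal.ofReal (exp A) * ∫⁻ u, ENNReal.ofReal (exp (F u + g u)) ∂ν) :=
        mul_le_mul' hZinv hnum
    _ = _ := by
        rw [two_mul, exp_add, ENNReal.ofReal_mul (exp_nonneg _)]
        ring

namespace Paper

variable {d : ℕ}

lemma add_unitv_ne_self (x : Site d) (i : Fin d) : x + unitv d i ≠ x := by
  intro h
  simpa [unitv] using congrFun h i

lemma sub_unitv_ne_self (x : Site d) (i : Fin d) : x - unitv d i ≠ x := by
  intro h
  simpa [unitv] using congrFun h i

lemma add_unitv_ne_sub_unitv (x : Site d) (i j : Fin d) : x + unitv d i ≠ x - unitv d j := by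
  intro h
  have := congrFun h i
  simp only [Pi.add_apply, Pi.sub_apply, unitv] at this
  split_ifs at this <;> omega

lemma unitv_injective : Function.Injective (unitv d) := by
  intro i j h
  by_contra hij
  simpa [unitv, hij] using congrFun h i

lemma sum_nbrs (x : Site d) (g : Site d → ℝ) :
    ∑ y ∈ nbrs d x, g y = ∑ i, (g (x + unitv d i) + g (x - unitv d i)) := by
  rw [nbrs, Finset.sum_union, Finset.sum_image, Finset.sum_image, ← Finset.sum_add_distrib]
  · exact fun i _ j _ h => unitv_injective (sub_right_injective h)
  · exact fun i _ j _ h => unitv_injective (add_right_injective x h)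
  · simp only [Finset.disjoint_left, Finset.mem_image, Finset.mem_univ, true_and]
    rintro _ ⟨i, rfl⟩ ⟨j, hj⟩
    exact add_unitv_ne_sub_unitv x i j hj.symm

lemma sum_nbrEdges (x : Site d) (g : Edge d → ℝ) :
    ∑ e ∈ nbrEdges d x, g e = ∑ i, (g (x, i) + g (x - unitv d i, i)) := by
  rw [nbrEdges, Finset.sum_union, Finset.sum_image, Finset.sum_image, ← Finset.sum_add_distrib]
  · exact fun i _ j _ h => congrArg Prod.snd h
  · exact fun i _ j _ h => congrArg Prod.snd h
  · simp only [Finset.disjoint_left, Finset.mem_image, Finset.mem_univ, true_and]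
    rintro _ ⟨i, rfl⟩ ⟨j, hj⟩
    exact sub_unitv_ne_self x j (congrArg Prod.fst hj)

lemma glue_singleton_const (x y : Site d) (u : ℝ) (ξ : Config d) :
    glue d {x} (fun _ => u) ξ y = if y = x then u else ξ y := by
  simp [glue]

lemma energy_singleton (x : Site d) (J : Edge d → ℝ) (u : ℝ) (ξ : Config d) :
    energy d {x} J (fun _ => u) ξ =
      ∑ i, (J (x, i) * u * ξ (x + unitv d i) + J (x - unitv d i, i) * ξ (x - unitv d i) * u) := by
  rw [energy, edgesIn, Finset.singleton_biUnion, sum_nbrEdges]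
  refine Finset.sum_congr rfl fun i _ => ?_
  simp only [ept, sub_add_cancel, glue_singleton_const, add_unitv_ne_self, sub_unitv_ne_self,
    if_true, if_false]

lemma abs_energy_singleton_le {q p k : ℝ} (hqp : q.HolderConjugate (p / 2)) (hk : 0 < k)
    (x : Site d) (J : Edge d → ℝ) (u : ℝ) (ξ : Config d) :
    |energy d {x} J (fun _ => u) ξ| ≤
      k ^ (1 - q) * ∑ e ∈ nbrEdges d x, |J e| ^ q + k / 2 * ∑ y ∈ nbrs d x, |ξ y| ^ p
        + d * k * |u| ^ p := by
  rw [energy_singleton, sum_nbrEdges, sum_nbrs]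
  refine (Finset.abs_sum_le_sum_abs _ _).trans ?_
  calc ∑ i, |J (x, i) * u * ξ (x + unitv d i) + J (x - unitv d i, i) * ξ (x - unitv d i) * u|
      ≤ ∑ i, ((k ^ (1 - q) * |J (x, i)| ^ q + k / 2 * (|u| ^ p + |ξ (x + unitv d i)| ^ p))
          + (k ^ (1 - q) * |J (x - unitv d i, i)| ^ q
            + k / 2 * (|ξ (x - unitv d i)| ^ p + |u| ^ p))) := by
        gcongr with i
        exact (abs_add_le _ _).trans (add_le_add
          (Real.abs_mul_mul_le_of_holderConjugate hqp hk _ _ _)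
          (Real.abs_mul_mul_le_of_holderConjugate hqp hk _ _ _))
    _ = _ := by
        simp only [Finset.sum_add_distrib, ← Finset.mul_sum, Finset.sum_const, Finset.card_univ,
          Fintype.card_fin, nsmul_eq_mul]
        ring

lemma measurable_glue (Δ : Finset (Site d)) (ξ : Config d) :
    Measurable fun σ : (x : Δ) → ℝ => glue d Δ σ ξ := by
  refine measurable_pi_lambda _ fun z => ?_
  by_cases hz : z ∈ Δ
  · simpa [glue, hz] using measurable_pi_apply (⟨z, hz⟩ : Δ)
  · simp [glue, hz]

lemma measurable_energy (Δ : Finset (Site d)) (J : Edge d → ℝ) (ξ : Config d) :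
    Measurable fun σ : (x : Δ) → ℝ => energy d Δ J σ ξ := by
  have hglue := measurable_glue Δ ξ
  unfold energy
  fun_prop

variable (χ : Site d → Measure ℝ)

lemma lintegral_gibbsKernel (Δ : Finset (Site d)) (J : Edge d → ℝ) (ξ : Config d)
    {F : Config d → ℝ≥0∞} (hF : Measurable F) :
    ∫⁻ σ, F σ ∂gibbsKernel d χ Δ J ξ = (Zpart d χ Δ J ξ)⁻¹ *
      ∫⁻ σ, ENNReal.ofReal (Real.exp (energy d Δ J σ ξ)) * F (glue d Δ σ ξ) ∂refMeas d χ Δ := by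
  rw [gibbsKernel, lintegral_smul_measure, lintegral_map hF (measurable_glue Δ ξ), smul_eq_mul]
  congr 1
  exact lintegral_withDensity_eq_lintegral_mul _ (measurable_energy Δ J ξ).exp.ennreal_ofReal
    (hF.comp (measurable_glue Δ ξ))

lemma lintegral_refMeas_singleton (x : Site d) (G : (({x} : Finset (Site d)) → ℝ) → ℝ≥0∞) :
    ∫⁻ σ, G σ ∂refMeas d χ {x} = ∫⁻ u, G (fun _ => u) ∂χ x := by
  have e := (measurePreserving_piUnique fun y : ({x} : Finset (Site d)) => χ y.1).symm
  rw [refMeas, ← e.lintegral_comp_emb (MeasurableEquiv.measurableEmbedding _)]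
  congr with u

lemma lintegral_gibbsKernel_singleton (x : Site d) (J : Edge d → ℝ) (ξ : Config d)
    {f : ℝ → ℝ≥0∞} (hf : Measurable f) :
    ∫⁻ σ, f (σ x) ∂gibbsKernel d χ {x} J ξ =
      (∫⁻ u, ENNReal.ofReal (Real.exp (energy d {x} J (fun _ => u) ξ)) ∂χ x)⁻¹ *
        ∫⁻ u, ENNReal.ofReal (Real.exp (energy d {x} J (fun _ => u) ξ)) * f u ∂χ x := by
  rw [lintegral_gibbsKernel χ {x} J ξ (F := fun σ => f (σ x)) (hf.comp (measurable_pi_apply x)),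
    Zpart, lintegral_refMeas_singleton, lintegral_refMeas_singleton]
  simp [glue_singleton_const]

variable (p : ℝ)

lemma lintegral_le_Cplus (x : Site d) (l : ℝ) :
    ∫⁻ u, ENNReal.ofReal (Real.exp (l * |u| ^ p)) ∂χ x ≤ Cplus d χ p l :=
  le_iSup (fun z => ∫⁻ u, ENNReal.ofReal (Real.exp (l * |u| ^ p)) ∂χ z) x

lemma Cminus_le_lintegral (x : Site d) (l : ℝ) :
    Cminus d χ p l ≤ ∫⁻ u, ENNReal.ofReal (Real.exp (-(l * |u| ^ p))) ∂χ x :=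
  iInf_le (fun z => ∫⁻ u, ENNReal.ofReal (Real.exp (-(l * |u| ^ p))) ∂χ z) x

variable [∀ x, IsProbabilityMeasure (χ x)]

lemma one_le_Cplus {l : ℝ} (hl : 0 ≤ l) : 1 ≤ Cplus d χ p l := by
  refine le_trans ?_ (lintegral_le_Cplus χ p 0 l)
  calc (1 : ℝ≥0∞) = ∫⁻ _, 1 ∂χ 0 := by simp
    _ ≤ _ := lintegral_mono fun u => ENNReal.one_le_ofReal.2 (Real.one_le_exp (by positivity))

lemma Cminus_le_one {l : ℝ} (hl : 0 ≤ l) : Cminus d χ p l ≤ 1 := by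
  refine (Cminus_le_lintegral χ p 0 l).trans ?_
  calc _ ≤ ∫⁻ _, 1 ∂χ 0 := lintegral_mono fun u => ENNReal.ofReal_le_one.2
          (Real.exp_le_one_iff.2 (neg_nonpos.2 (by positivity)))
    _ = 1 := by simp

end Paper

theorem one_point_estimate_general (d : ℕ) (hd : 0 < d)
    (w : Site d → ℝ)
    (q p : ℝ) (hq : 1 < q) (hp : p = 2 * q / (q - 1))
    (χ : Site d → Measure ℝ) [∀ x, IsProbabilityMeasure (χ x)]
    (hCp : ∀ l : ℝ, 0 < l → Cplus d χ p l < ⊤)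
    (hCm : ∀ l : ℝ, 0 < l → 0 < Cminus d χ p l) :
    ∀ l k : ℝ, 0 < l → 0 < k → ∀ x : Site d, ∀ J ∈ JqSet d w q, ∀ ξ : Config d,
      ∫⁻ σ, ENNReal.ofReal (Real.exp (l * |σ x| ^ p))
          ∂(gibbsKernel d χ ({x} : Finset (Site d)) J ξ)
        ≤ ENNReal.ofReal (Real.exp
            ((Real.log (Cplus d χ p (l + 2 * d * k)).toReal
                - Real.log (Cminus d χ p (2 * d * k)).toReal)
              + 2 * k * ∑ y ∈ nbrs d x, |ξ y| ^ p
              + 2 * k ^ (1 - q) * ∑ e ∈ nbrEdges d x, |J e| ^ q)) := by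
  intro l k hl hk x J _ ξ
  have hqp : q.HolderConjugate (p / 2) := by
    convert Real.HolderConjugate.conjExponent hq using 1
    rw [hp, Real.conjExponent]
    ring
  have hdk : 0 < 2 * d * k := by positivity
  set A := k ^ (1 - q) * ∑ e ∈ nbrEdges d x, |J e| ^ q + k / 2 * ∑ y ∈ nbrs d x, |ξ y| ^ p
    with hA
  have hE (u : ℝ) : |energy d {x} J (fun _ => u) ξ| ≤ A + 2 * d * k * |u| ^ p :=
    (abs_energy_singleton_le hqp hk x J u ξ).trans
      (by linarith [show 0 ≤ d * k * |u| ^ p by positivity])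
  have hCp₀ : Cplus d χ p (l + 2 * d * k) ≠ 0 :=
    (zero_lt_one.trans_le (one_le_Cplus χ p (by positivity))).ne'
  have hCm_top : Cminus d χ p (2 * d * k) ≠ ⊤ :=
    ((Cminus_le_one χ p hdk.le).trans_lt ENNReal.one_lt_top).ne
  rw [lintegral_gibbsKernel_singleton χ x J ξ
      (f := fun u => ENNReal.ofReal (Real.exp (l * |u| ^ p))) (by fun_prop), add_assoc,
    ENNReal.ofReal_exp_log_toReal_sub_log_toReal hCp₀ (hCp _ (by positivity)).ne (hCm _ hdk).ne'
      hCm_top]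
  calc _ ≤ ENNReal.ofReal (Real.exp (2 * A)) *
        (∫⁻ u, ENNReal.ofReal (Real.exp (l * |u| ^ p + 2 * d * k * |u| ^ p)) ∂χ x) *
        (∫⁻ u, ENNReal.ofReal (Real.exp (-(2 * d * k * |u| ^ p))) ∂χ x)⁻¹ :=
        lintegral_exp_ratio_le_of_abs_le (χ x) hE
    _ ≤ _ := by
        gcongr
        · linarith [show 0 ≤ k * ∑ y ∈ nbrs d x, |ξ y| ^ p by positivity]
        · simpa only [add_mul] using lintegral_le_Cplus χ p x (l + 2 * d * k)
        · exact Cminus_le_lintegral χ p x (2 * d * k)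

/-- Lemma 5.1: the one-point estimate. -/
theorem one_point_estimate (d : ℕ) (hd : 0 < d)
    (w : Site d → ℝ) (hw_pos : ∀ x, 0 < w x) (hw_one : ∀ x, w x ≤ 1) (hw_sum : Summable w)
    (w₀ : ℝ) (hw₀ : 0 < w₀) (hw_nb : ∀ x : Site d, ∀ y ∈ nbrs d x, w x ≤ w₀ * w y)
    (q p : ℝ) (hq : 1 < q) (hp : p = 2 * q / (q - 1))
    (χ : Site d → Measure ℝ) [∀ x, IsProbabilityMeasure (χ x)]
    (hCp : ∀ l : ℝ, 0 < l → Cplus d χ p l < ⊤)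
    (hCm : ∀ l : ℝ, 0 < l → 0 < Cminus d χ p l) :
    ∀ l k : ℝ, 0 < l → 0 < k → ∀ x : Site d, ∀ J ∈ JqSet d w q, ∀ ξ : Config d,
      ∫⁻ σ, ENNReal.ofReal (Real.exp (l * |σ x| ^ p))
          ∂(gibbsKernel d χ ({x} : Finset (Site d)) J ξ)
        ≤ ENNReal.ofReal (Real.exp
            ((Real.log (Cplus d χ p (l + 2 * d * k)).toReal
                - Real.log (Cminus d χ p (2 * d * k)).toReal)
              + 2 * k * ∑ y ∈ nbrs d x, |ξ y| ^ p
              + 2 * k ^ (1 - q) * ∑ e ∈ nbrEdges d x, |J e| ^ q)) :=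
  one_point_estimate_general d hd w q p hq hp χ hCp hCm
end
end

section
/- (First GKS-type inequality for the averaged pressure) Let ν be a product probability measure on the coordinates (J_{xy})_{⟨x,y⟩∈E} with ν(𝒥_q) = 1, satisfying sup_{⟨x,y⟩∈E} ∫ |J_{xy}|^q ν(dJ) < ∞ and ∫ J_{xy} ν(dJ) = 0 for every edge. Fix a finite Δ ⊂ ℤ^d and an edge ⟨x̄,ȳ⟩ ∈ E with x̄, ȳ ∈ Δ, and let −H̄_Δ(σ_Δ|J,0) = −H_Δ(σ_Δ|J,0) − J_{x̄ȳ}σ(x̄)σ(ȳ) be the energy with the edge ⟨x̄,ȳ⟩ removed. Define, for λ ∈ ℝ, P_Δ(λ) = ∫_{𝒥_q} log( ∫_{ℝ^Δ} exp(λ J_{x̄ȳ} σ(x̄)σ(ȳ) − H̄_Δ(σ_Δ|J,0)) ∏_{x∈Δ} χ_x(dσ(x)) ) ν(dJ). Then P_Δ(1) ≥ P_Δ(0). -/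
open MeasureTheory ENNReal Filter Topology

noncomputable section

open Paper

/-- `P_Δ(λ)`: the disorder-averaged log-partition function with the coupling of the
distinguished edge scaled by `λ`. -/
def Pfun (d : ℕ) (χ : Site d → Measure ℝ) [∀ x, SigmaFinite (χ x)]
    (Δ : Finset (Site d)) (ebar : Edge d) (ν : Measure (Edge d → ℝ)) (lam : ℝ) : ℝ :=
  ∫ J, Real.log ((∫⁻ σ, ENNReal.ofReal (Real.exp
      (lam * (J ebar * glue d Δ σ 0 ebar.1 * glue d Δ σ 0 (ept d ebar))
        + (energy d Δ J σ 0 - J ebar * glue d Δ σ 0 ebar.1 * glue d Δ σ 0 (ept d ebar))))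
      ∂(refMeas d χ Δ)).toReal) ∂ν

/-!
Let `Z(t, r)` be the partition function with coupling `t` on the distinguished edge and
couplings `r` on the other edges meeting `Δ`, so that `P_Δ(λ) = E[log Z(λ J_ē, r(J))]`.
Hölder's inequality makes `t ↦ log Z(t, r)` convex, and `J_ē` is centred and independent of
`r(J)`, so Jensen's inequality in `J_ē` at fixed `r` gives `E[log Z(J_ē, r)] ≥ log Z(0, r)`;
averaging over `r` yields `P_Δ(1) ≥ P_Δ(0)`.  The expectations are finite: Young's
inequality with exponents `q, q/(q-1)` followed by AM–GM gives
`|J σ(x) σ(y)| ≤ |J|^q + (|σ(x)|^p + |σ(y)|^p) / 2` for `p = 2q/(q-1)`, which bounds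
`|log Z(t, r)|` by `|t|^q + ∑ₑ |rₑ|^q` plus a constant that is finite because `C₊ < ∞`.
-/

open Real Set ProbabilityTheory Paper

section General

variable {α : Type*} [MeasurableSpace α]

lemma lintegral_pi_prod_eq_prod_lintegral {ι : Type*} [Fintype ι] {β : ι → Type*}
    [∀ i, MeasurableSpace (β i)] (μ : ∀ i, Measure (β i)) [∀ i, IsProbabilityMeasure (μ i)]
    {g : ∀ i, β i → ℝ≥0∞} (hg : ∀ i, Measurable (g i)) :
    ∫⁻ x, ∏ i, g i (x i) ∂Measure.pi μ = ∏ i, ∫⁻ u, g i u ∂μ i := by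
  rw [lintegral_prod_eq_prod_lintegral_of_indepFun _ _
    (iIndepFun_pi fun i => (hg i).aemeasurable) fun i => (hg i).comp (measurable_pi_apply i)]
  exact Finset.prod_congr rfl fun i _ => (measurePreserving_eval μ i).lintegral_comp (hg i)

lemma lintegral_ofReal_exp_pos (μ : Measure α) [NeZero μ] {f : α → ℝ} (hf : Measurable f) :
    0 < ∫⁻ a, ENNReal.ofReal (exp (f a)) ∂μ := by
  rw [lintegral_pos_iff_support (by fun_prop)]
  simp [Function.support, exp_pos, NeZero.ne μ]

lemma one_le_lintegral_ofReal_exp (μ : Measure α) [IsProbabilityMeasure μ] {f : α → ℝ}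
    (hf : ∀ a, 0 ≤ f a) : 1 ≤ ∫⁻ a, ENNReal.ofReal (exp (f a)) ∂μ :=
  calc 1 = ∫⁻ _, ENNReal.ofReal (exp 0) ∂μ := by simp
    _ ≤ _ := lintegral_mono fun a => ofReal_le_ofReal (exp_le_exp.2 (hf a))

lemma lintegral_ofReal_exp_le_one (μ : Measure α) [IsProbabilityMeasure μ] {f : α → ℝ}
    (hf : ∀ a, f a ≤ 0) : ∫⁻ a, ENNReal.ofReal (exp (f a)) ∂μ ≤ 1 :=
  calc _ ≤ ∫⁻ _, ENNReal.ofReal (exp 0) ∂μ :=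
        lintegral_mono fun a => ofReal_le_ofReal (exp_le_exp.2 (hf a))
    _ = 1 := by simp

lemma lintegral_exp_le_of_le (μ : Measure α) {E N : α → ℝ} {K : ℝ}
    (hE : ∀ a, E a ≤ K + N a) :
    ∫⁻ a, ENNReal.ofReal (exp (E a)) ∂μ ≤
      ENNReal.ofReal (exp K) * ∫⁻ a, ENNReal.ofReal (exp (N a)) ∂μ := by
  rw [← lintegral_const_mul' _ _ ofReal_ne_top]
  refine lintegral_mono fun a => ?_
  rw [← ENNReal.ofReal_mul (exp_nonneg _), ← exp_add]
  exact ENNReal.ofReal_le_ofReal (exp_le_exp.2 (hE a))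

lemma log_toReal_le_add_log_toReal {x y : ℝ≥0∞} {K : ℝ} (hx : 0 < x.toReal) (hy : y ≠ ⊤)
    (h : x ≤ ENNReal.ofReal (exp K) * y) : log x.toReal ≤ K + log y.toReal := by
  have h' : x.toReal ≤ exp K * y.toReal := by
    simpa [ENNReal.toReal_mul, exp_nonneg] using
      ENNReal.toReal_mono (mul_ne_top ofReal_ne_top hy) h
  have hy0 : 0 < y.toReal := pos_of_mul_pos_right (hx.trans_le h') (exp_pos K).le
  rw [← log_exp K, ← log_mul (exp_ne_zero K) hy0.ne']
  exact log_le_log hx h'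

lemma abs_log_lintegral_exp_le (μ : Measure α) [IsProbabilityMeasure μ] {E N : α → ℝ} {K : ℝ}
    (hN : Measurable N) (hN0 : ∀ a, 0 ≤ N a)
    (hfin : ∫⁻ a, ENNReal.ofReal (exp (N a)) ∂μ ≠ ⊤) (hE : ∀ a, |E a| ≤ K + N a) :
    |log (∫⁻ a, ENNReal.ofReal (exp (E a)) ∂μ).toReal| ≤
      K + (log (∫⁻ a, ENNReal.ofReal (exp (N a)) ∂μ).toReal -
        log (∫⁻ a, ENNReal.ofReal (exp (-N a)) ∂μ).toReal) := by
  set Z := ∫⁻ a, ENNReal.ofReal (exp (E a)) ∂μ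
  set A := ∫⁻ a, ENNReal.ofReal (exp (N a)) ∂μ
  set B := ∫⁻ a, ENNReal.ofReal (exp (-N a)) ∂μ
  have hZA : Z ≤ ENNReal.ofReal (exp K) * A :=
    lintegral_exp_le_of_le μ fun a => (le_abs_self _).trans (hE a)
  have hBZ : B ≤ ENNReal.ofReal (exp K) * Z :=
    lintegral_exp_le_of_le μ fun a => by linarith [neg_abs_le (E a), hE a]
  have hA1 : 1 ≤ A.toReal := by
    simpa using ENNReal.toReal_mono hfin (one_le_lintegral_ofReal_exp μ hN0)
  have hB1 : B ≤ 1 := lintegral_ofReal_exp_le_one μ fun a => neg_nonpos.2 (hN0 a)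
  have hB0 : 0 < B := lintegral_ofReal_exp_pos μ hN.neg
  have hB0' : 0 < B.toReal := ENNReal.toReal_pos hB0.ne' (ne_top_of_le_ne_top one_ne_top hB1)
  have hZ_top : Z ≠ ⊤ := ne_top_of_le_ne_top (mul_ne_top ofReal_ne_top hfin) hZA
  have hZ0 : 0 < Z.toReal := ENNReal.toReal_pos (fun hZ => by simp [hZ, hB0.ne'] at hBZ) hZ_top
  have hupper := log_toReal_le_add_log_toReal hZ0 hfin hZA
  have hlower := log_toReal_le_add_log_toReal hB0' hZ_top hBZ
  have := log_nonneg hA1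
  have := log_nonpos hB0'.le (by simpa using ENNReal.toReal_mono one_ne_top hB1)
  rw [abs_le]
  constructor <;> linarith

lemma convexOn_log_lintegral_exp (μ : Measure α) [NeZero μ] {f g : α → ℝ}
    (hf : Measurable f) (hg : Measurable g)
    (hfin : ∀ t, ∫⁻ a, ENNReal.ofReal (exp (t * f a + g a)) ∂μ ≠ ⊤) :
    ConvexOn ℝ univ fun t => log (∫⁻ a, ENNReal.ofReal (exp (t * f a + g a)) ∂μ).toReal := by
  set Z := fun t => ∫⁻ a, ENNReal.ofReal (exp (t * f a + g a)) ∂μ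
  have hZ0 : ∀ t, 0 < (Z t).toReal := fun t =>
    ENNReal.toReal_pos (lintegral_ofReal_exp_pos μ (by fun_prop)).ne' (hfin t)
  refine ⟨convex_univ, fun t₁ _ t₂ _ a b ha hb hab => ?_⟩
  have holder : Z (a * t₁ + b * t₂) ≤ Z t₁ ^ a * Z t₂ ^ b :=
    calc Z (a * t₁ + b * t₂)
        = ∫⁻ x, ENNReal.ofReal (exp (t₁ * f x + g x)) ^ a *
            ENNReal.ofReal (exp (t₂ * f x + g x)) ^ b ∂μ := by
          refine lintegral_congr fun x => ?_
          rw [ENNReal.ofReal_rpow_of_pos (exp_pos _), ENNReal.ofReal_rpow_of_pos (exp_pos _),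
            ← ENNReal.ofReal_mul (by positivity), ← exp_mul, ← exp_mul, ← exp_add]
          congr 2
          linear_combination (-g x) * hab
      _ ≤ Z t₁ ^ a * Z t₂ ^ b :=
          ENNReal.lintegral_mul_norm_pow_le (by fun_prop) (by fun_prop) ha hb hab
  have holder_real : (Z (a * t₁ + b * t₂)).toReal ≤ (Z t₁).toReal ^ a * (Z t₂).toReal ^ b := by
    rw [ENNReal.toReal_rpow, ENNReal.toReal_rpow, ← ENNReal.toReal_mul]
    exact ENNReal.toReal_mono (mul_ne_top (rpow_ne_top_of_nonneg ha (hfin t₁))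
      (rpow_ne_top_of_nonneg hb (hfin t₂))) holder
  have := log_le_log (hZ0 _) holder_real
  rwa [log_mul (by have := hZ0 t₁; positivity) (by have := hZ0 t₂; positivity),
    log_rpow (hZ0 t₁), log_rpow (hZ0 t₂)] at this

lemma integral_zero_prod_le_integral_prod {β : Type*} [MeasurableSpace β]
    {μ : Measure ℝ} [IsProbabilityMeasure μ] {ν : Measure β} [IsProbabilityMeasure ν]
    (hμ : Integrable id μ) (hmean : ∫ t, t ∂μ = 0) {G : ℝ × β → ℝ}
    (hG : Integrable G (μ.prod ν)) (hG0 : Integrable (fun r => G (0, r)) ν)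
    (hconv : ∀ r, ConvexOn ℝ univ fun t => G (t, r)) :
    ∫ r, G (0, r) ∂ν ≤ ∫ z, G z ∂(μ.prod ν) := by
  rw [integral_prod_symm G hG]
  refine integral_mono_ae hG0 hG.integral_prod_right ?_
  filter_upwards [hG.prod_left_ae] with r hr
  have := (hconv r).map_integral_le ((hconv r).continuousOn isOpen_univ) isClosed_univ
    (ae_of_all _ fun _ => mem_univ _) hμ hr
  simpa [hmean] using this

lemma integral_comp_zero_le_of_indepFun {Ω β : Type*} [MeasurableSpace Ω] [MeasurableSpace β]
    {P : Measure Ω} [IsProbabilityMeasure P] {X : Ω → ℝ} {Y : Ω → β}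
    (hX : Measurable X) (hY : Measurable Y) (hXY : IndepFun X Y P)
    (hXi : Integrable X P) (hmean : ∫ ω, X ω ∂P = 0) {G : ℝ × β → ℝ} (hGm : Measurable G)
    (hG : Integrable (fun ω => G (X ω, Y ω)) P) (hG0 : Integrable (fun ω => G (0, Y ω)) P)
    (hconv : ∀ r, ConvexOn ℝ univ fun t => G (t, r)) :
    ∫ ω, G (0, Y ω) ∂P ≤ ∫ ω, G (X ω, Y ω) ∂P := by
  have hlaw : P.map (fun ω => (X ω, Y ω)) = (P.map X).prod (P.map Y) :=
    (indepFun_iff_map_prod_eq_prod_map_map hX.aemeasurable hY.aemeasurable).1 hXY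
  have hG0m : Measurable fun r => G (0, r) := hGm.comp measurable_prodMk_left
  have : IsProbabilityMeasure (P.map X) := Measure.isProbabilityMeasure_map hX.aemeasurable
  have : IsProbabilityMeasure (P.map Y) := Measure.isProbabilityMeasure_map hY.aemeasurable
  have := integral_zero_prod_le_integral_prod (μ := P.map X) (ν := P.map Y)
    ((integrable_map_measure aestronglyMeasurable_id hX.aemeasurable).2 hXi)
    ((integral_map hX.aemeasurable (f := fun t => t) aestronglyMeasurable_id).trans hmean)
    (by rwa [← hlaw, integrable_map_measure hGm.aestronglyMeasurable (by fun_prop)])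
    ((integrable_map_measure hG0m.aestronglyMeasurable hY.aemeasurable).2 hG0) hconv
  rwa [← hlaw, integral_map (by fun_prop) hGm.aestronglyMeasurable,
    integral_map hY.aemeasurable hG0m.aestronglyMeasurable] at this

lemma ProbabilityTheory.iIndepFun.indepFun_finset_of_notMem {Ω ι β : Type*}
    [MeasurableSpace Ω] [MeasurableSpace β] {μ : Measure Ω} {f : ι → Ω → β}
    (h : iIndepFun f μ) (hf : ∀ i, Measurable (f i)) {i : ι} {S : Finset ι} (hi : i ∉ S) :
    IndepFun (f i) (fun ω (j : S) => f j ω) μ :=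
  (h.indepFun_finset {i} S (Finset.disjoint_singleton_left.2 hi) hf).comp
    (φ := fun v : ({i} : Finset ι) → β => v ⟨i, Finset.mem_singleton_self i⟩) (ψ := id)
    (measurable_pi_apply _) measurable_id

lemma abs_mul_mul_le_rpow_add_rpow {q p : ℝ} (hq : 1 < q) (hp : p = 2 * q / (q - 1))
    (c a b : ℝ) : |c * (a * b)| ≤ |c| ^ q + (|a| ^ p + |b| ^ p) / 2 := by
  have hq' : q.HolderConjugate q.conjExponent := .conjExponent hq
  have hsq : ∀ x : ℝ, 0 ≤ x → (x ^ q.conjExponent) ^ 2 = x ^ p := fun x hx => by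
    rw [← Real.rpow_natCast, ← rpow_mul hx, Real.conjExponent, hp]
    congr 1
    field_simp [(sub_pos.2 hq).ne']
    ring
  have hA := abs_nonneg a
  have hB := abs_nonneg b
  have young := young_inequality_of_nonneg (abs_nonneg c) (mul_nonneg hA hB) hq'
  have hcq : |c| ^ q / q ≤ |c| ^ q := div_le_self (by positivity) (by linarith)
  have hab : (|a| * |b|) ^ q.conjExponent / q.conjExponent ≤ (|a| * |b|) ^ q.conjExponent :=
    div_le_self (by positivity) hq'.symm.lt.le
  rw [mul_rpow hA hB] at young hab
  have := hsq _ hA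
  have := hsq _ hB
  rw [abs_mul, abs_mul]
  nlinarith [sq_nonneg (|a| ^ q.conjExponent - |b| ^ q.conjExponent)]

end General

namespace GKS

variable {d : ℕ} {Δ : Finset (Site d)} {ebar : Edge d} {χ : Site d → Measure ℝ} {q p : ℝ}

variable (Δ) in
def spinProduct (e : Edge d) (σ : Δ → ℝ) : ℝ := glue d Δ σ 0 e.1 * glue d Δ σ 0 (ept d e)

lemma measurable_glue_zero (z : Site d) : Measurable fun σ : Δ → ℝ => glue d Δ σ 0 z := by
  by_cases h : z ∈ Δ
  · simpa [glue, h] using measurable_pi_apply (⟨z, h⟩ : Δ)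
  · simp only [glue, h, dite_false]
    exact measurable_const

lemma measurable_spinProduct (e : Edge d) : Measurable (spinProduct Δ e) :=
  (measurable_glue_zero e.1).mul (measurable_glue_zero (ept d e))

lemma abs_glue_zero_rpow_le_sum (hp : 0 < p) (z : Site d) (σ : Δ → ℝ) :
    |glue d Δ σ 0 z| ^ p ≤ ∑ x, |σ x| ^ p := by
  by_cases h : z ∈ Δ
  · simpa [glue, h] using Finset.single_le_sum (f := fun x => |σ x| ^ p)
      (fun x _ => by positivity) (Finset.mem_univ (⟨z, h⟩ : Δ))
  · simpa [glue, h, zero_rpow hp.ne'] using Finset.sum_nonneg fun x _ => by positivity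

lemma abs_mul_spinProduct_le (hq : 1 < q) (hp : p = 2 * q / (q - 1))
    (c : ℝ) (e : Edge d) (σ : Δ → ℝ) :
    |c * spinProduct Δ e σ| ≤ |c| ^ q + ∑ x, |σ x| ^ p := by
  have hp0 : 0 < p := by rw [hp]; exact div_pos (by linarith) (by linarith)
  have := abs_mul_mul_le_rpow_add_rpow hq hp c (glue d Δ σ 0 e.1) (glue d Δ σ 0 (ept d e))
  have := abs_glue_zero_rpow_le_sum (Δ := Δ) hp0 e.1 σ
  have := abs_glue_zero_rpow_le_sum (Δ := Δ) hp0 (ept d e) σ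
  unfold spinProduct
  linarith

section Partition

variable (Δ ebar)

def otherEdges : Finset (Edge d) := (edgesIn d Δ).erase ebar

def otherEnergy (r : otherEdges Δ ebar → ℝ) (σ : Δ → ℝ) : ℝ :=
  ∑ e, r e * spinProduct Δ e σ

variable (χ) [∀ x, SigmaFinite (χ x)]

def partitionFn (t : ℝ) (r : otherEdges Δ ebar → ℝ) : ℝ≥0∞ :=
  ∫⁻ σ, ENNReal.ofReal (exp (t * spinProduct Δ ebar σ + otherEnergy Δ ebar r σ)) ∂refMeas d χ Δ

def logPartition (z : ℝ × (otherEdges Δ ebar → ℝ)) : ℝ :=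
  log (partitionFn Δ ebar χ z.1 z.2).toReal

variable {Δ ebar χ}

lemma energy_eq_add_otherEnergy (h1 : ebar.1 ∈ Δ) (J : Edge d → ℝ) (σ : Δ → ℝ) :
    energy d Δ J σ 0 = J ebar * spinProduct Δ ebar σ + otherEnergy Δ ebar (fun e => J e) σ := by
  have hmem : ebar ∈ edgesIn d Δ := Finset.mem_biUnion.2 ⟨ebar.1, h1,
    Finset.mem_union_left _ (Finset.mem_image.2 ⟨ebar.2, Finset.mem_univ _, rfl⟩)⟩
  rw [energy, ← Finset.add_sum_erase _ _ hmem, otherEnergy, otherEdges,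
    ← Finset.sum_coe_sort ((edgesIn d Δ).erase ebar)]
  simp [spinProduct, mul_assoc]

lemma Pfun_eq_integral_logPartition (h1 : ebar.1 ∈ Δ) (ν : Measure (Edge d → ℝ)) (lam : ℝ) :
    Pfun d χ Δ ebar ν lam = ∫ J, logPartition Δ ebar χ (lam * J ebar, fun e => J e) ∂ν := by
  refine integral_congr_ae (ae_of_all _ fun J => ?_)
  simp only [logPartition, partitionFn]
  congr 3
  funext σ
  rw [energy_eq_add_otherEnergy h1, spinProduct]
  ring_nf

end Partition

variable [∀ x, IsProbabilityMeasure (χ x)]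

instance : IsProbabilityMeasure (refMeas d χ Δ) := by
  unfold refMeas; infer_instance

lemma lintegral_exp_mul_sum_rpow_ne_top {l : ℝ} (hC : Cplus d χ p l < ⊤) :
    ∫⁻ σ, ENNReal.ofReal (exp (l * ∑ x, |σ x| ^ p)) ∂refMeas d χ Δ ≠ ⊤ := by
  have hfactor : ∀ σ : Δ → ℝ, ENNReal.ofReal (exp (l * ∑ x, |σ x| ^ p)) =
      ∏ x, ENNReal.ofReal (exp (l * |σ x| ^ p)) := fun σ => by
    rw [Finset.mul_sum, exp_sum, ENNReal.ofReal_prod_of_nonneg fun _ _ => exp_nonneg _]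
  simp_rw [hfactor]
  rw [refMeas, lintegral_pi_prod_eq_prod_lintegral (fun x : Δ => χ x.1)
    (g := fun _ u => ENNReal.ofReal (exp (l * |u| ^ p))) fun _ => by fun_prop]
  refine ENNReal.prod_ne_top fun x _ => ne_top_of_le_ne_top hC.ne ?_
  exact le_iSup (fun y : Site d => ∫⁻ u, ENNReal.ofReal (exp (l * |u| ^ p)) ∂χ y) x.1

lemma abs_mul_spinProduct_add_otherEnergy_le (hq : 1 < q) (hp : p = 2 * q / (q - 1)) (t : ℝ)
    (r : otherEdges Δ ebar → ℝ) (σ : Δ → ℝ) :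
    |t * spinProduct Δ ebar σ + otherEnergy Δ ebar r σ| ≤
      (|t| ^ q + ∑ e, |r e| ^ q) + ((otherEdges Δ ebar).card + 1 : ℝ) * ∑ x, |σ x| ^ p := by
  have hother : |otherEnergy Δ ebar r σ| ≤ ∑ e, (|r e| ^ q + ∑ x, |σ x| ^ p) :=
    (Finset.abs_sum_le_sum_abs _ _).trans
      (Finset.sum_le_sum fun e _ => abs_mul_spinProduct_le hq hp (r e) e σ)
  rw [Finset.sum_add_distrib, Finset.sum_const, Finset.card_univ, Fintype.card_coe,
    nsmul_eq_mul] at hother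
  have := abs_mul_spinProduct_le hq hp t ebar σ
  linarith [abs_add_le (t * spinProduct Δ ebar σ) (otherEnergy Δ ebar r σ)]

lemma partitionFn_ne_top (hq : 1 < q) (hp : p = 2 * q / (q - 1))
    (hC : Cplus d χ p ((otherEdges Δ ebar).card + 1) < ⊤) (t : ℝ) (r : otherEdges Δ ebar → ℝ) :
    partitionFn Δ ebar χ t r ≠ ⊤ :=
  ne_top_of_le_ne_top (mul_ne_top ofReal_ne_top (lintegral_exp_mul_sum_rpow_ne_top hC))
    (lintegral_exp_le_of_le _ fun σ =>
      (le_abs_self _).trans (abs_mul_spinProduct_add_otherEnergy_le hq hp t r σ))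

lemma abs_logPartition_le (hq : 1 < q) (hp : p = 2 * q / (q - 1))
    (hC : Cplus d χ p ((otherEdges Δ ebar).card + 1) < ⊤) :
    ∃ C, ∀ t r, |logPartition Δ ebar χ (t, r)| ≤ |t| ^ q + ∑ e, |r e| ^ q + C :=
  ⟨_, fun t r => abs_log_lintegral_exp_le _ (by fun_prop)
    (fun σ => by positivity) (lintegral_exp_mul_sum_rpow_ne_top hC)
    (abs_mul_spinProduct_add_otherEnergy_le hq hp t r)⟩

lemma measurable_otherEnergy : Measurable fun z : (otherEdges Δ ebar → ℝ) × (Δ → ℝ) =>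
    otherEnergy Δ ebar z.1 z.2 :=
  Finset.measurable_sum _ fun e _ =>
    ((measurable_pi_apply e).comp measurable_fst).mul
      ((measurable_spinProduct (Δ := Δ) e.1).comp measurable_snd)

lemma measurable_logPartition : Measurable (logPartition Δ ebar χ) := by
  have hσ : Measurable fun z : (ℝ × (otherEdges Δ ebar → ℝ)) × (Δ → ℝ) =>
      spinProduct Δ ebar z.2 := (measurable_spinProduct ebar).comp measurable_snd
  have hr : Measurable fun z : (ℝ × (otherEdges Δ ebar → ℝ)) × (Δ → ℝ) =>
      otherEnergy Δ ebar z.1.2 z.2 :=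
    measurable_otherEnergy.comp ((measurable_snd.comp measurable_fst).prodMk measurable_snd)
  have hexp : Measurable fun z : (ℝ × (otherEdges Δ ebar → ℝ)) × (Δ → ℝ) =>
      ENNReal.ofReal (exp (z.1.1 * spinProduct Δ ebar z.2 + otherEnergy Δ ebar z.1.2 z.2)) := by
    fun_prop
  exact measurable_log.comp hexp.lintegral_prod_right'.ennreal_toReal

lemma convexOn_logPartition (hq : 1 < q) (hp : p = 2 * q / (q - 1))
    (hC : Cplus d χ p ((otherEdges Δ ebar).card + 1) < ⊤) (r : otherEdges Δ ebar → ℝ) :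
    ConvexOn ℝ univ fun t => logPartition Δ ebar χ (t, r) := by
  have hr : Measurable (otherEnergy Δ ebar r) :=
    measurable_otherEnergy.comp (measurable_const.prodMk measurable_id)
  simpa only [logPartition, partitionFn] using
    convexOn_log_lintegral_exp (refMeas d χ Δ) (measurable_spinProduct ebar) hr
      fun t => partitionFn_ne_top hq hp hC t r

lemma integrable_logPartition_comp {Ω : Type*} [MeasurableSpace Ω] {P : Measure Ω}
    [IsProbabilityMeasure P] (hq : 1 < q) (hp : p = 2 * q / (q - 1))
    (hC : Cplus d χ p ((otherEdges Δ ebar).card + 1) < ⊤) {T : Ω → ℝ}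
    {R : Ω → otherEdges Δ ebar → ℝ} (hT : Measurable T) (hR : Measurable R)
    (hTq : Integrable (fun ω => |T ω| ^ q) P) (hRq : ∀ e, Integrable (fun ω => |R ω e| ^ q) P) :
    Integrable (fun ω => logPartition Δ ebar χ (T ω, R ω)) P := by
  obtain ⟨C, hbound⟩ := abs_logPartition_le (Δ := Δ) (ebar := ebar) (χ := χ) hq hp hC
  have hmajorant : Integrable (fun ω => |T ω| ^ q + ∑ e, |R ω e| ^ q + C) P :=
    (hTq.add (integrable_finsetSum Finset.univ fun e _ => hRq e)).add (integrable_const C)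
  exact hmajorant.mono' (measurable_logPartition.comp (hT.prodMk hR)).aestronglyMeasurable
    (ae_of_all _ fun ω => hbound (T ω) (R ω))

end GKS

open GKS

theorem gks_type_inequality_general (d : ℕ)
    (q p : ℝ) (hq : 1 < q) (hp : p = 2 * q / (q - 1))
    (χ : Site d → Measure ℝ) [∀ x, IsProbabilityMeasure (χ x)]
    (hCp : ∀ l : ℝ, 0 < l → Cplus d χ p l < ⊤)
    (ν : Measure (Edge d → ℝ)) [IsProbabilityMeasure ν]
    (hprod : ProbabilityTheory.iIndepFun (m := fun _ : Edge d => (inferInstance : MeasurableSpace ℝ))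
      (fun e (J : Edge d → ℝ) => J e) ν)
    (ha : ∃ a : ℝ, ∀ e : Edge d, ∫⁻ J, ENNReal.ofReal (|J e| ^ q) ∂ν ≤ ENNReal.ofReal a)
    (hint : ∀ e : Edge d, Integrable (fun J : Edge d → ℝ => J e) ν)
    (hmean : ∀ e : Edge d, ∫ J, J e ∂ν = 0)
    (Δ : Finset (Site d)) (ebar : Edge d) (h1 : ebar.1 ∈ Δ) :
    Pfun d χ Δ ebar ν 0 ≤ Pfun d χ Δ ebar ν 1 := by
  obtain ⟨a, ha⟩ := ha
  have hmoment : ∀ e, Integrable (fun J : Edge d → ℝ => |J e| ^ q) ν := fun e =>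
    ⟨(measurable_pi_apply e).abs.pow_const q |>.aestronglyMeasurable,
      (hasFiniteIntegral_iff_ofReal (ae_of_all _ fun _ => by positivity)).2
      ((ha e).trans_lt ofReal_lt_top)⟩
  have hC := hCp ((otherEdges Δ ebar).card + 1) (by positivity)
  have hX : Measurable fun J : Edge d → ℝ => J ebar := measurable_pi_apply ebar
  have hY : Measurable fun (J : Edge d → ℝ) (e : otherEdges Δ ebar) => J e := by fun_prop
  rw [Pfun_eq_integral_logPartition h1, Pfun_eq_integral_logPartition h1]
  simp only [zero_mul, one_mul]
  exact integral_comp_zero_le_of_indepFun hX hY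
    (hprod.indepFun_finset_of_notMem measurable_pi_apply (Finset.notMem_erase ebar _))
    (hint ebar) (hmean ebar) measurable_logPartition
    (integrable_logPartition_comp hq hp hC hX hY (hmoment ebar) fun e => hmoment e)
    (integrable_logPartition_comp hq hp hC measurable_const hY
      (by simp [zero_rpow (show q ≠ 0 by linarith)]) fun e => hmoment e)
    (convexOn_logPartition hq hp hC)

/-- The first GKS-type inequality for the averaged pressure: `P_Δ(1) ≥ P_Δ(0)`. -/
theorem gks_type_inequality (d : ℕ) (hd : 0 < d)
    (w : Site d → ℝ) (hw_pos : ∀ x, 0 < w x) (hw_one : ∀ x, w x ≤ 1) (hw_sum : Summable w)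
    (w₀ : ℝ) (hw₀ : 0 < w₀) (hw_nb : ∀ x : Site d, ∀ y ∈ nbrs d x, w x ≤ w₀ * w y)
    (q p : ℝ) (hq : 1 < q) (hp : p = 2 * q / (q - 1))
    (χ : Site d → Measure ℝ) [∀ x, IsProbabilityMeasure (χ x)]
    (hCp : ∀ l : ℝ, 0 < l → Cplus d χ p l < ⊤)
    (hCm : ∀ l : ℝ, 0 < l → 0 < Cminus d χ p l)
    (ν : Measure (Edge d → ℝ)) [IsProbabilityMeasure ν]
    (hprod : ProbabilityTheory.iIndepFun (m := fun _ : Edge d => (inferInstance : MeasurableSpace ℝ))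
      (fun e (J : Edge d → ℝ) => J e) ν)
    (hν1 : ν (JqSet d w q) = 1)
    (ha : ∃ a : ℝ, ∀ e : Edge d, ∫⁻ J, ENNReal.ofReal (|J e| ^ q) ∂ν ≤ ENNReal.ofReal a)
    (hint : ∀ e : Edge d, Integrable (fun J : Edge d → ℝ => J e) ν)
    (hmean : ∀ e : Edge d, ∫ J, J e ∂ν = 0)
    (Δ : Finset (Site d)) (ebar : Edge d) (h1 : ebar.1 ∈ Δ) (h2 : ept d ebar ∈ Δ) :
    Pfun d χ Δ ebar ν 0 ≤ Pfun d χ Δ ebar ν 1 :=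
  gks_type_inequality_general d q p hq hp χ hCp ν hprod ha hint hmean Δ ebar h1
end
end
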